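/- arXiv:2302.10636 — 3 statements merged into one kernel-verified Lean document; each statement's English description precedes it below -/
import Mathlib

section
/- Every c-analytic subset of ℝⁿ can be written as a countable union of pairwise disjoint analytic sets. -/
open Set

/-- An analytic set in ℝⁿ: carved out by finitely many analytic inequalities
`gᵢ ≤ 0` on an open set. -/
def IsAnalyticSet {n : ℕ} (A : Set (Fin n → ℝ)) : Prop :=
  ∃ (U : Set (Fin n → ℝ)) (I : Finset ℕ) (g : ℕ → (Fin n → ℝ) → ℝ),
    IsOpen U ∧ (∀ i ∈ I, AnalyticOnNhd ℝ (g i) U) ∧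
    A = {x | x ∈ U ∧ ∀ i ∈ I, g i x ≤ 0}

/-- A c-analytic set: a countable union of analytic sets. -/
def IsCAnalyticSet {n : ℕ} (A : Set (Fin n → ℝ)) : Prop :=
  ∃ B : ℕ → Set (Fin n → ℝ), (∀ i, IsAnalyticSet (B i)) ∧ A = ⋃ i, B i

namespace CAnal
variable {n : ℕ}

lemma analytic_empty : IsAnalyticSet (∅ : Set (Fin n → ℝ)) :=
  ⟨∅, ∅, fun _ _ => 0, isOpen_empty, by simp, by simp⟩

lemma analytic_univ : IsAnalyticSet (univ : Set (Fin n → ℝ)) :=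
  ⟨univ, ∅, fun _ _ => 0, isOpen_univ, by simp, by simp⟩

lemma analytic_inter {A B : Set (Fin n → ℝ)} (hA : IsAnalyticSet A)
    (hB : IsAnalyticSet B) : IsAnalyticSet (A ∩ B) := by
  obtain ⟨U, I, g, hU, hg, rfl⟩ := hA
  obtain ⟨V, J, h, hV, hh, rfl⟩ := hB
  refine ⟨U ∩ V, I.image (fun i => 2 * i) ∪ J.image (fun j => 2 * j + 1),
    fun k => if k % 2 = 0 then g (k / 2) else h (k / 2), hU.inter hV, ?_, ?_⟩
  · intro k hk
    simp only [Finset.mem_union, Finset.mem_image] at hk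
    rcases hk with ⟨i, hi, rfl⟩ | ⟨j, hj, rfl⟩
    · simpa using (hg i hi).mono inter_subset_left
    · have h1 : (2 * j + 1) % 2 = 1 := by omega
      have h2 : (2 * j + 1) / 2 = j := by omega
      simp only [h1, h2]
      simpa using (hh j hj).mono inter_subset_right
  · ext x
    simp only [mem_inter_iff, mem_setOf_eq, Finset.mem_union, Finset.mem_image]
    constructor
    · rintro ⟨⟨hxU, hgx⟩, hxV, hhx⟩
      refine ⟨⟨hxU, hxV⟩, ?_⟩
      rintro k (⟨i, hi, rfl⟩ | ⟨j, hj, rfl⟩)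
      · simpa using hgx i hi
      · have h1 : (2 * j + 1) % 2 = 1 := by omega
        have h2 : (2 * j + 1) / 2 = j := by omega
        simp only [h1, h2]
        simpa using hhx j hj
    · rintro ⟨⟨hxU, hxV⟩, hk⟩
      refine ⟨⟨hxU, fun i hi => ?_⟩, hxV, fun j hj => ?_⟩
      · have := hk (2 * i) (Or.inl ⟨i, hi, rfl⟩)
        simpa using this
      · have := hk (2 * j + 1) (Or.inr ⟨j, hj, rfl⟩)
        have h1 : (2 * j + 1) % 2 = 1 := by omega
        have h2 : (2 * j + 1) / 2 = j := by omega
        simpa [h1, h2] using this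

lemma analytic_iInter_fin {m : ℕ} {G : Fin m → Set (Fin n → ℝ)}
    (h : ∀ s, IsAnalyticSet (G s)) : IsAnalyticSet (⋂ s, G s) := by
  induction m with
  | zero => simpa using analytic_univ
  | succ m ih =>
    have : (⋂ s, G s) = G 0 ∩ ⋂ s : Fin m, G s.succ := by
      ext x; simp [Fin.forall_fin_succ]
    rw [this]
    exact analytic_inter (h 0) (ih fun s => h s.succ)

def ocell (lo hi : Fin n → Option ℝ) : Set (Fin n → ℝ) :=
  {x | ∀ i, (∀ a ∈ lo i, a ≤ x i) ∧ ∀ b ∈ hi i, x i < b}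

lemma isOpen_hi (hi : Fin n → Option ℝ) :
    IsOpen {x : Fin n → ℝ | ∀ i, ∀ b ∈ hi i, x i < b} := by
  have : {x : Fin n → ℝ | ∀ i, ∀ b ∈ hi i, x i < b}
      = ⋂ i, {x : Fin n → ℝ | ∀ b ∈ hi i, x i < b} := by
    ext x; simp
  rw [this]
  refine isOpen_iInter_of_finite fun i => ?_
  cases h : hi i with
  | none => simp [h]
  | some b =>
    simp only [h, Option.mem_def, Option.some.injEq, forall_eq']
    exact isOpen_lt (continuous_apply i) continuous_const

lemma stdAnalytic {V : Set (Fin n → ℝ)} (hV : IsOpen V)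
    (lo hi : Fin n → Option ℝ) (g : ℕ → (Fin n → ℝ) → ℝ) (J : Finset ℕ)
    (hg : ∀ j ∈ J, AnalyticOnNhd ℝ (g j) V) :
    IsAnalyticSet {x | x ∈ V ∧ x ∈ ocell lo hi ∧ ∀ j ∈ J, g j x ≤ 0} := by
  classical
  set U : Set (Fin n → ℝ) := V ∩ {x | ∀ i, ∀ b ∈ hi i, x i < b} with hUdef
  refine ⟨U, Finset.range n ∪ J.image (fun j => j + n),
    fun k => if h : k < n
      then fun x => ((lo ⟨k, h⟩).elim (-1) (fun a => a - x ⟨k, h⟩))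
      else g (k - n), hV.inter (isOpen_hi hi), ?_, ?_⟩
  · intro k hk
    by_cases h : k < n
    · simp only [dif_pos h]
      cases hcase : lo ⟨k, h⟩ with
      | none => simpa [hcase] using (analyticOnNhd_const : AnalyticOnNhd ℝ (fun _ => (-1:ℝ)) U)
      | some a =>
        simp only [hcase, Option.elim]
        exact (analyticOnNhd_const).sub
          ((ContinuousLinearMap.proj (R := ℝ) (φ := fun _ : Fin n => ℝ) ⟨k, h⟩).analyticOnNhd U)
    · simp only [dif_neg h]
      simp only [Finset.mem_union, Finset.mem_range, Finset.mem_image] at hk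
      rcases hk with hk | ⟨j, hj, rfl⟩
      · omega
      · have : j + n - n = j := by omega
        rw [this]
        exact (hg j hj).mono inter_subset_left
  · ext x
    simp only [mem_setOf_eq, hUdef, mem_inter_iff, Finset.mem_union, Finset.mem_range,
      Finset.mem_image]
    constructor
    · rintro ⟨hxV, hcell, hJ⟩
      refine ⟨⟨hxV, fun i => (hcell i).2⟩, ?_⟩
      rintro k (hk | ⟨j, hj, rfl⟩)
      · simp only [dif_pos hk]
        cases hcase : lo ⟨k, hk⟩ with
        | none => norm_num
        | some a =>
          simp only [Option.elim, sub_nonpos]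
          exact (hcell ⟨k, hk⟩).1 a (by simp [hcase])
      · have h : ¬ (j + n < n) := by omega
        have h2 : j + n - n = j := by omega
        simp only [dif_neg h, h2]
        exact hJ j hj
    · rintro ⟨⟨hxV, hhi⟩, hk⟩
      refine ⟨hxV, fun i => ⟨fun a ha => ?_, hhi i⟩, fun j hj => ?_⟩
      · have := hk i.1 (Or.inl i.2)
        simp only [dif_pos i.2] at this
        rw [show (⟨i.1, i.2⟩ : Fin n) = i from rfl, ha] at this
        simpa [sub_nonpos] using this
      · have := hk (j + n) (Or.inr ⟨j, hj, rfl⟩)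
        have h : ¬ (j + n < n) := by omega
        have h2 : j + n - n = j := by omega
        simpa [dif_neg h, h2] using this

lemma analytic_ocell (lo hi : Fin n → Option ℝ) : IsAnalyticSet (ocell lo hi) := by
  have := stdAnalytic isOpen_univ lo hi (fun _ _ => 0) ∅ (by simp)
  simpa using this

lemma analytic_piece {U : Set (Fin n → ℝ)} (hU : IsOpen U)
    (g : ℕ → (Fin n → ℝ) → ℝ) (I : Finset ℕ)
    (hg : ∀ j ∈ I, AnalyticOnNhd ℝ (g j) U) (lo hi : Fin n → Option ℝ)
    (hsub : ocell lo hi ⊆ U) :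
    IsAnalyticSet {x | x ∈ ocell lo hi ∧ ∀ j ∈ I, g j x ≤ 0} := by
  have := stdAnalytic hU lo hi g I hg
  have he : {x | x ∈ U ∧ x ∈ ocell lo hi ∧ ∀ j ∈ I, g j x ≤ 0}
      = {x | x ∈ ocell lo hi ∧ ∀ j ∈ I, g j x ≤ 0} := by
    ext x
    exact ⟨fun h => h.2, fun h => ⟨hsub h.1, h⟩⟩
  rwa [he] at this

lemma transfer {κ : Type} [Countable κ] (F : κ → Set (Fin n → ℝ))
    (h1 : ∀ c, IsAnalyticSet (F c)) (h2 : Pairwise (Function.onFun Disjoint F)) :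
    ∃ G : ℕ → Set (Fin n → ℝ), (∀ k, IsAnalyticSet (G k)) ∧
      Pairwise (Function.onFun Disjoint G) ∧ (⋃ k, G k) = ⋃ c, F c := by
  obtain ⟨f, hf⟩ := Countable.exists_injective_nat κ
  classical
  refine ⟨fun k => ⋃ (c : κ) (_ : f c = k), F c, fun k => ?_, ?_, ?_⟩
  · show IsAnalyticSet (⋃ (c : κ) (_ : f c = k), F c)
    by_cases h : ∃ c, f c = k
    · obtain ⟨c, hc⟩ := h
      have : (⋃ (c' : κ) (_ : f c' = k), F c') = F c := by
        apply subset_antisymm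
        · refine iUnion₂_subset fun c' hc' => ?_
          have : c' = c := hf (hc'.trans hc.symm)
          rw [this]
        · exact subset_iUnion₂ (s := fun c' _ => F c') c hc
      rw [this]; exact h1 c
    · have : (⋃ (c' : κ) (_ : f c' = k), F c') = ∅ := by
        simp only [iUnion_eq_empty]
        intro c hc
        exact absurd ⟨c, hc⟩ h
      rw [this]; exact analytic_empty
  · intro k k' hkk'
    simp only [Function.onFun, disjoint_left]
    intro x hx hx'
    simp only [mem_iUnion] at hx hx'
    obtain ⟨c, hc, hxc⟩ := hx
    obtain ⟨c', hc', hxc'⟩ := hx'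
    have hne : c ≠ c' := by rintro rfl; exact hkk' (hc ▸ hc')
    exact (h2 hne).le_bot ⟨hxc, hxc'⟩ |>.elim
  · apply subset_antisymm
    · refine iUnion_subset fun k => iUnion₂_subset fun c _ => subset_iUnion F c
    · refine iUnion_subset fun c => ?_
      intro x hx
      exact mem_iUnion.2 ⟨f c, mem_iUnion₂.2 ⟨c, rfl, hx⟩⟩

def Good (S : Set (Fin n → ℝ)) : Prop :=
  IsAnalyticSet S ∧ ∃ F : ℕ → Set (Fin n → ℝ), (∀ k, IsAnalyticSet (F k)) ∧
    Pairwise (Function.onFun Disjoint F) ∧ Sᶜ = ⋃ k, F k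

lemma good_empty : Good (∅ : Set (Fin n → ℝ)) := by
  refine ⟨analytic_empty, fun k => if k = 0 then univ else ∅, fun k => ?_, ?_, ?_⟩
  · by_cases h : k = 0 <;> simp [h, analytic_univ, analytic_empty]
  · intro k k' hkk'
    simp only [Function.onFun]
    rcases eq_or_ne k 0 with rfl | hk
    · simp [hkk'.symm]
    · simp [hk]
  · ext x
    simp only [compl_empty, mem_univ, mem_iUnion, true_iff]
    exact ⟨0, by simp⟩

def rcell (a b : Fin n → ℝ) : Set (Fin n → ℝ) :=
  ocell (fun i => some (a i)) (fun i => some (b i))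

lemma mem_rcell {a b : Fin n → ℝ} {x : Fin n → ℝ} :
    x ∈ rcell a b ↔ ∀ i, a i ≤ x i ∧ x i < b i := by
  simp [rcell, ocell]

def Vlow (a b : Fin n → ℝ) (i0 : Fin n) : Set (Fin n → ℝ) :=
  ocell (fun j => if j < i0 then some (a j) else none)
    (fun j => if j < i0 then some (b j) else if j = i0 then some (a i0) else none)

def Vhigh (a b : Fin n → ℝ) (i0 : Fin n) : Set (Fin n → ℝ) :=
  ocell (fun j => if j < i0 then some (a j)
      else if j = i0 then some (max (a i0) (b i0)) else none)
    (fun j => if j < i0 then some (b j) else none)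

lemma mem_Vlow {a b : Fin n → ℝ} {i0 : Fin n} {x : Fin n → ℝ} :
    x ∈ Vlow a b i0 ↔ (∀ j, j < i0 → (a j ≤ x j ∧ x j < b j)) ∧ x i0 < a i0 := by
  constructor
  · intro h
    refine ⟨fun j hj => ⟨(h j).1 _ (by simp [Vlow, hj]), (h j).2 _ (by simp [Vlow, hj])⟩, ?_⟩
    exact (h i0).2 _ (by simp [Vlow, lt_irrefl])
  · rintro ⟨h1, h2⟩ j
    constructor
    · intro a' ha'
      by_cases hj : j < i0
      · simp only [Vlow, hj, if_pos, Option.mem_def, Option.some.injEq] at ha'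
        exact ha' ▸ (h1 j hj).1
      · simp [Vlow, hj] at ha'
    · intro b' hb'
      by_cases hj : j < i0
      · simp only [Vlow, hj, if_pos, Option.mem_def, Option.some.injEq] at hb'
        exact hb' ▸ (h1 j hj).2
      · by_cases hj2 : j = i0
        · subst hj2
          simp [Vlow, hj] at hb'
          subst hb'
          exact h2
        · simp [Vlow, hj, hj2] at hb'

lemma mem_Vhigh {a b : Fin n → ℝ} {i0 : Fin n} {x : Fin n → ℝ} :
    x ∈ Vhigh a b i0 ↔ (∀ j, j < i0 → (a j ≤ x j ∧ x j < b j))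
      ∧ max (a i0) (b i0) ≤ x i0 := by
  constructor
  · intro h
    refine ⟨fun j hj => ⟨(h j).1 _ (by simp [Vhigh, hj]), (h j).2 _ (by simp [Vhigh, hj])⟩, ?_⟩
    exact (h i0).1 _ (by simp [Vhigh, lt_irrefl])
  · rintro ⟨h1, h2⟩ j
    constructor
    · intro a' ha'
      by_cases hj : j < i0
      · simp only [Vhigh, hj, if_pos, Option.mem_def, Option.some.injEq] at ha'
        exact ha' ▸ (h1 j hj).1
      · by_cases hj2 : j = i0
        · subst hj2
          simp [Vhigh, hj] at ha'
          subst ha'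
          exact h2
        · simp [Vhigh, hj, hj2] at ha'
    · intro b' hb'
      by_cases hj : j < i0
      · simp only [Vhigh, hj, if_pos, Option.mem_def, Option.some.injEq] at hb'
        exact hb' ▸ (h1 j hj).2
      · simp [Vhigh, hj] at hb'

lemma Vlow_not_sat {a b : Fin n → ℝ} {i0 : Fin n} {x : Fin n → ℝ}
    (h : x ∈ Vlow a b i0) : ¬ (a i0 ≤ x i0 ∧ x i0 < b i0) := by
  rw [mem_Vlow] at h
  intro hc
  exact absurd hc.1 (not_le.2 h.2)

lemma Vhigh_not_sat {a b : Fin n → ℝ} {i0 : Fin n} {x : Fin n → ℝ}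
    (h : x ∈ Vhigh a b i0) : ¬ (a i0 ≤ x i0 ∧ x i0 < b i0) := by
  rw [mem_Vhigh] at h
  intro hc
  exact absurd hc.2 (not_lt.2 (le_trans (le_max_right _ _) h.2))

def Gpiece (U : Set (Fin n → ℝ)) (g : ℕ → (Fin n → ℝ) → ℝ) (I : Finset ℕ)
    (a b : Fin n → ℝ) (j0 : ℕ) : Set (Fin n → ℝ) :=
  {x | x ∈ {y | y ∈ U ∧ 0 < g j0 y} ∧ x ∈ rcell a b
    ∧ ∀ j ∈ I.filter (· < j0), g j x ≤ 0}

lemma compl_decomp {U : Set (Fin n → ℝ)} (hU : IsOpen U)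
    (g : ℕ → (Fin n → ℝ) → ℝ) (I : Finset ℕ)
    (hg : ∀ j ∈ I, AnalyticOnNhd ℝ (g j) U) (a b : Fin n → ℝ)
    (hsub : rcell a b ⊆ U) :
    Good {x | x ∈ rcell a b ∧ ∀ j ∈ I, g j x ≤ 0} := by
  classical
  set P := {x | x ∈ rcell a b ∧ ∀ j ∈ I, g j x ≤ 0} with hP
  refine ⟨analytic_piece hU g I hg _ _ hsub, ?_⟩
  set F : ((Fin n × Bool) ⊕ ℕ) → Set (Fin n → ℝ) := fun c =>
    match c with
    | Sum.inl (i0, false) => Vlow a b i0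
    | Sum.inl (i0, true) => Vhigh a b i0
    | Sum.inr j => if j ∈ I then Gpiece U g I a b j else ∅
    with hF
  have hGsubcell : ∀ j, Gpiece U g I a b j ⊆ rcell a b := fun j x hx => hx.2.1
  have hFan : ∀ c, IsAnalyticSet (F c) := by
    rintro (⟨i0, _ | _⟩ | j)
    · exact analytic_ocell _ _
    · exact analytic_ocell _ _
    · show IsAnalyticSet (if j ∈ I then Gpiece U g I a b j else ∅)
      split
      case isTrue hj =>
        have hV : IsOpen {y | y ∈ U ∧ 0 < g j y} := by
          have : {y | y ∈ U ∧ 0 < g j y} = U ∩ (g j) ⁻¹' (Ioi 0) := rfl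
          rw [this]
          exact ((hg j hj).continuousOn).isOpen_inter_preimage hU isOpen_Ioi
        have := stdAnalytic hV (fun i => some (a i)) (fun i => some (b i)) g
          (I.filter (· < j)) (fun j' hj' => (hg j' (Finset.mem_filter.1 hj').1).mono
            (fun y hy => hy.1))
        exact this
      case isFalse => exact analytic_empty
  have hFdisj : Pairwise (Function.onFun Disjoint F) := by
    have key : ∀ c c' : (Fin n × Bool) ⊕ ℕ, ∀ x, x ∈ F c → x ∈ F c' → c = c' := by
      rintro (⟨i0, s0⟩ | j0) (⟨i1, s1⟩ | j1) x hx hx'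
      · -- two V pieces
        have prefix0 : ∀ j, j < i0 → (a j ≤ x j ∧ x j < b j) := by
          cases s0
          · exact (mem_Vlow.1 hx).1
          · exact (mem_Vhigh.1 hx).1
        have prefix1 : ∀ j, j < i1 → (a j ≤ x j ∧ x j < b j) := by
          cases s1
          · exact (mem_Vlow.1 hx').1
          · exact (mem_Vhigh.1 hx').1
        have viol0 : ¬ (a i0 ≤ x i0 ∧ x i0 < b i0) := by
          cases s0
          · exact Vlow_not_sat hx
          · exact Vhigh_not_sat hx
        have viol1 : ¬ (a i1 ≤ x i1 ∧ x i1 < b i1) := by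
          cases s1
          · exact Vlow_not_sat hx'
          · exact Vhigh_not_sat hx'
        have hii : i0 = i1 := by
          rcases lt_trichotomy i0 i1 with h | h | h
          · exact absurd (prefix1 i0 h) viol0
          · exact h
          · exact absurd (prefix0 i1 h) viol1
        subst hii
        have hss : s0 = s1 := by
          rcases s0 with _ | _ <;> rcases s1 with _ | _
          · rfl
          · exact absurd (le_trans (le_max_left _ _) (mem_Vhigh.1 hx').2)
              (not_le.2 (mem_Vlow.1 hx).2)
          · exact absurd (le_trans (le_max_left _ _) (mem_Vhigh.1 hx).2)
              (not_le.2 (mem_Vlow.1 hx').2)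
          · rfl
        rw [hss]
      · -- V piece vs G piece
        exfalso
        have hj1 : j1 ∈ I := by
          by_contra h
          simp only [hF, if_neg h] at hx'
          exact hx'
        simp only [hF, if_pos hj1] at hx'
        have hcell : x ∈ rcell a b := hx'.2.1
        have : a i0 ≤ x i0 ∧ x i0 < b i0 := mem_rcell.1 hcell i0
        cases s0
        · exact Vlow_not_sat hx this
        · exact Vhigh_not_sat hx this
      · -- G piece vs V piece
        exfalso
        have hj0 : j0 ∈ I := by
          by_contra h
          simp only [hF, if_neg h] at hx
          exact hx
        simp only [hF, if_pos hj0] at hx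
        have hcell : x ∈ rcell a b := hx.2.1
        have : a i1 ≤ x i1 ∧ x i1 < b i1 := mem_rcell.1 hcell i1
        cases s1
        · exact Vlow_not_sat hx' this
        · exact Vhigh_not_sat hx' this
      · -- two G pieces
        have hj0 : j0 ∈ I := by
          by_contra h; simp only [hF, if_neg h] at hx; exact hx
        have hj1 : j1 ∈ I := by
          by_contra h; simp only [hF, if_neg h] at hx'; exact hx'
        simp only [hF, if_pos hj0] at hx
        simp only [hF, if_pos hj1] at hx'
        congr 1
        rcases lt_trichotomy j0 j1 with h | h | h
        · exfalso
          have := hx'.2.2 j0 (Finset.mem_filter.2 ⟨hj0, h⟩)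
          exact absurd hx.1.2 (not_lt.2 this)
        · exact h
        · exfalso
          have := hx.2.2 j1 (Finset.mem_filter.2 ⟨hj1, h⟩)
          exact absurd hx'.1.2 (not_lt.2 this)
    intro c c' hcc'
    simp only [Function.onFun, disjoint_left]
    intro x hx hx'
    exact hcc' (key c c' x hx hx')
  have hFunion : Pᶜ = ⋃ c, F c := by
    apply subset_antisymm
    · intro x hx
      simp only [hP, mem_compl_iff, mem_setOf_eq, not_and] at hx
      by_cases hcell : x ∈ rcell a b
      · -- some g is positive; take the least index
        have hex : ∃ j ∈ I, 0 < g j x := by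
          have := hx hcell
          push_neg at this
          obtain ⟨j, hj, hgj⟩ := this
          exact ⟨j, hj, hgj⟩
        set T := I.filter (fun j => 0 < g j x) with hT
        have hTne : T.Nonempty := by
          obtain ⟨j, hj, hgj⟩ := hex
          exact ⟨j, Finset.mem_filter.2 ⟨hj, hgj⟩⟩
        set j0 := T.min' hTne with hj0
        have hj0T : j0 ∈ T := T.min'_mem hTne
        have hj0I : j0 ∈ I := (Finset.mem_filter.1 hj0T).1
        have hj0pos : 0 < g j0 x := (Finset.mem_filter.1 hj0T).2
        refine mem_iUnion.2 ⟨Sum.inr j0, ?_⟩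
        simp only [hF, if_pos hj0I]
        refine ⟨⟨hsub hcell, hj0pos⟩, hcell, ?_⟩
        intro j hj
        obtain ⟨hjI, hjlt⟩ := Finset.mem_filter.1 hj
        by_contra hc
        push_neg at hc
        have : j ∈ T := Finset.mem_filter.2 ⟨hjI, hc⟩
        exact absurd (T.min'_le j this) (not_le.2 hjlt)
      · -- some coordinate violated; take the least one
        rw [mem_rcell] at hcell
        push_neg at hcell
        set T := Finset.univ.filter (fun i : Fin n => ¬ (a i ≤ x i ∧ x i < b i)) with hT
        have hTne : T.Nonempty := by
          obtain ⟨i, hi⟩ := hcell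
          refine ⟨i, Finset.mem_filter.2 ⟨Finset.mem_univ _, ?_⟩⟩
          intro hc
          exact absurd (hi hc.1) (not_le.2 hc.2)
        set i0 := T.min' hTne with hi0
        have hi0T : i0 ∈ T := T.min'_mem hTne
        have hi0viol : ¬ (a i0 ≤ x i0 ∧ x i0 < b i0) := (Finset.mem_filter.1 hi0T).2
        have hpre : ∀ j, j < i0 → (a j ≤ x j ∧ x j < b j) := by
          intro j hj
          by_contra hc
          have : j ∈ T := Finset.mem_filter.2 ⟨Finset.mem_univ _, hc⟩
          exact absurd (T.min'_le j this) (not_le.2 hj)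
        by_cases hlow : x i0 < a i0
        · exact mem_iUnion.2 ⟨Sum.inl (i0, false), mem_Vlow.2 ⟨hpre, hlow⟩⟩
        · push_neg at hlow
          have hhigh : b i0 ≤ x i0 := by
            by_contra hc
            push_neg at hc
            exact hi0viol ⟨hlow, hc⟩
          exact mem_iUnion.2 ⟨Sum.inl (i0, true),
            mem_Vhigh.2 ⟨hpre, max_le hlow hhigh⟩⟩
    · refine iUnion_subset ?_
      rintro (⟨i0, s0⟩ | j) x hx
      · simp only [hP, mem_compl_iff, mem_setOf_eq, not_and]
        intro hcell
        exfalso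
        have := mem_rcell.1 hcell i0
        cases s0
        · exact Vlow_not_sat hx this
        · exact Vhigh_not_sat hx this
      · simp only [hP, mem_compl_iff, mem_setOf_eq, not_and]
        intro hcell
        have hjI : j ∈ I := by
          by_contra h; simp only [hF, if_neg h] at hx; exact hx
        simp only [hF, if_pos hjI] at hx
        push_neg
        exact ⟨j, hjI, hx.1.2⟩
  obtain ⟨G, hG1, hG2, hG3⟩ := transfer F hFan hFdisj
  exact ⟨G, hG1, hG2, hFunion.trans hG3.symm⟩

lemma cover_lemma {U : Set (Fin n → ℝ)} (hU : IsOpen U) {x : Fin n → ℝ}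
    (hx : x ∈ U) : ∃ a b : Fin n → ℚ,
      x ∈ rcell (fun i => (a i : ℝ)) (fun i => (b i : ℝ)) ∧
      rcell (fun i => ((a i : ℝ))) (fun i => (b i : ℝ)) ⊆ U := by
  obtain ⟨ε, hε, hball⟩ := Metric.isOpen_iff.1 hU x hx
  have hq : ∀ i : Fin n, ∃ p : ℚ × ℚ,
      x i - ε < (p.1 : ℝ) ∧ (p.1 : ℝ) ≤ x i ∧ x i < (p.2 : ℝ) ∧ (p.2 : ℝ) < x i + ε := by
    intro i
    obtain ⟨q1, hq11, hq12⟩ := exists_rat_btwn (show x i - ε < x i by linarith)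
    obtain ⟨q2, hq21, hq22⟩ := exists_rat_btwn (show x i < x i + ε by linarith)
    exact ⟨(q1, q2), hq11, le_of_lt hq12, hq21, hq22⟩
  choose p hp1 hp2 hp3 hp4 using hq
  refine ⟨fun i => (p i).1, fun i => (p i).2, ?_, ?_⟩
  · exact mem_rcell.2 fun i => ⟨hp2 i, hp3 i⟩
  · intro y hy
    apply hball
    rw [Metric.mem_ball, dist_pi_lt_iff hε]
    intro i
    have := mem_rcell.1 hy i
    rw [Real.dist_eq, abs_sub_lt_iff]
    constructor
    · linarith [hp4 i, (mem_rcell.1 hy i).2]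
    · linarith [hp1 i, (mem_rcell.1 hy i).1]

lemma main_disjointify (P : ℕ → Set (Fin n → ℝ)) (hP : ∀ m, Good (P m)) :
    ∃ B : ℕ → Set (Fin n → ℝ), (∀ i, IsAnalyticSet (B i)) ∧
      Pairwise (Function.onFun Disjoint B) ∧ (⋃ m, P m) = ⋃ i, B i := by
  classical
  choose F hFan hFdisj hFcompl using fun m => (hP m).2
  set piece : ((m : ℕ) × (Fin m → ℕ)) → Set (Fin n → ℝ) :=
    fun t => P t.1 ∩ ⋂ s : Fin t.1, F s (t.2 s) with hpiece
  have piece_analytic : ∀ t, IsAnalyticSet (piece t) := by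
    rintro ⟨m, φ⟩
    exact analytic_inter (hP m).1 (analytic_iInter_fin fun s => hFan s (φ s))
  have piece_disjoint : Pairwise (Function.onFun Disjoint piece) := by
    have key : ∀ t t' : ((m : ℕ) × (Fin m → ℕ)), ∀ x, x ∈ piece t → x ∈ piece t' → t = t' := by
      rintro ⟨m, φ⟩ ⟨m', φ'⟩ x hx hx'
      have hmm : m = m' := by
        by_contra hne
        rcases Nat.lt_or_ge m m' with h | h
        · -- x ∈ P m but x ∈ F m (φ' ⟨m,h⟩) ⊆ (P m)ᶜ
          have h1 : x ∈ P m := hx.1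
          have h2 : x ∈ F m (φ' ⟨m, h⟩) := by
            have := hx'.2
            simp only [mem_iInter] at this
            exact this ⟨m, h⟩
          have : x ∈ (P m)ᶜ := by
            rw [hFcompl m]
            exact mem_iUnion.2 ⟨φ' ⟨m, h⟩, h2⟩
          exact this h1
        · have h : m' < m := by omega
          have h1 : x ∈ P m' := hx'.1
          have h2 : x ∈ F m' (φ ⟨m', h⟩) := by
            have := hx.2
            simp only [mem_iInter] at this
            exact this ⟨m', h⟩
          have : x ∈ (P m')ᶜ := by
            rw [hFcompl m']
            exact mem_iUnion.2 ⟨φ ⟨m', h⟩, h2⟩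
          exact this h1
      subst hmm
      have hφ : φ = φ' := by
        funext s
        by_contra hne
        have h1 : x ∈ F s (φ s) := by
          have := hx.2; simp only [mem_iInter] at this; exact this s
        have h2 : x ∈ F s (φ' s) := by
          have := hx'.2; simp only [mem_iInter] at this; exact this s
        exact ((hFdisj s) hne).le_bot ⟨h1, h2⟩
      rw [hφ]
    intro t t' htt'
    simp only [Function.onFun, disjoint_left]
    intro x hx hx'
    exact htt' (key t t' x hx hx')
  have piece_union : (⋃ t, piece t) = ⋃ m, P m := by
    apply subset_antisymm
    · exact iUnion_subset fun t => inter_subset_left.trans (subset_iUnion P t.1)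
    · intro x hx
      have hex : ∃ m, x ∈ P m := mem_iUnion.1 hx
      set m0 := Nat.find hex with hm0
      have hxm0 : x ∈ P m0 := Nat.find_spec hex
      have hmin : ∀ s : Fin m0, x ∈ (P s)ᶜ := fun s =>
        Nat.find_min hex s.2
      have hchoice : ∀ s : Fin m0, ∃ k, x ∈ F s k := by
        intro s
        have := hmin s
        rw [hFcompl s] at this
        exact mem_iUnion.1 this
      choose φ hφ using hchoice
      exact mem_iUnion.2 ⟨⟨m0, φ⟩, hxm0, mem_iInter.2 hφ⟩
  obtain ⟨B, hB1, hB2, hB3⟩ := transfer piece piece_analytic piece_disjoint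
  exact ⟨B, hB1, hB2, (piece_union.symm.trans hB3.symm)⟩

lemma good_reindex {κ : Type} [Countable κ] (P : κ → Set (Fin n → ℝ))
    (h : ∀ t, Good (P t)) : ∃ P' : ℕ → Set (Fin n → ℝ),
      (∀ m, Good (P' m)) ∧ (⋃ m, P' m) = ⋃ t, P t := by
  classical
  obtain ⟨f, hf⟩ := Countable.exists_injective_nat κ
  refine ⟨fun m => ⋃ (t : κ) (_ : f t = m), P t, fun m => ?_, ?_⟩
  · show Good (⋃ (t : κ) (_ : f t = m), P t)
    by_cases hex : ∃ t, f t = m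
    · obtain ⟨t, ht⟩ := hex
      have : (⋃ (t' : κ) (_ : f t' = m), P t') = P t := by
        apply subset_antisymm
        · refine iUnion₂_subset fun t' ht' => ?_
          have : t' = t := hf (ht'.trans ht.symm)
          rw [this]
        · exact subset_iUnion₂ (s := fun t' _ => P t') t ht
      rw [this]; exact h t
    · have : (⋃ (t' : κ) (_ : f t' = m), P t') = ∅ := by
        simp only [iUnion_eq_empty]
        intro t ht
        exact absurd ⟨t, ht⟩ hex
      rw [this]; exact good_empty
  · apply subset_antisymm
    · exact iUnion_subset fun m => iUnion₂_subset fun t _ => subset_iUnion P t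
    · refine iUnion_subset fun t x hx => ?_
      exact mem_iUnion.2 ⟨f t, mem_iUnion₂.2 ⟨t, rfl, hx⟩⟩

end CAnal

open CAnal

/-- Every c-analytic set can be written as a countable union of pairwise
disjoint analytic sets. -/
theorem canalytic_eq_disjoint_union_analytic {n : ℕ} {A : Set (Fin n → ℝ)}
    (hA : IsCAnalyticSet A) :
    ∃ B : ℕ → Set (Fin n → ℝ), (∀ i, IsAnalyticSet (B i)) ∧
      Pairwise (Function.onFun Disjoint B) ∧ A = ⋃ i, B i := by
  classical
  obtain ⟨B0, hB0, hAeq⟩ := hA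
  choose U I g hU hg heq using hB0
  set Q : (ℕ × ((Fin n → ℚ) × (Fin n → ℚ))) → Set (Fin n → ℝ) := fun t =>
    if rcell (fun i => ((t.2.1 i : ℝ))) (fun i => (t.2.2 i : ℝ)) ⊆ U t.1
    then {x | x ∈ rcell (fun i => ((t.2.1 i : ℝ))) (fun i => (t.2.2 i : ℝ))
      ∧ ∀ j ∈ I t.1, g t.1 j x ≤ 0}
    else ∅ with hQ
  have hQgood : ∀ t, Good (Q t) := by
    rintro ⟨m, a, b⟩
    show Good (if _ then _ else _)
    split
    case isTrue hsub => exact compl_decomp (hU m) (g m) (I m) (hg m) _ _ hsub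
    case isFalse => exact good_empty
  have hQunion : (⋃ t, Q t) = A := by
    apply subset_antisymm
    · refine iUnion_subset ?_
      rintro ⟨m, a, b⟩ x hx
      show x ∈ A
      rw [hAeq]
      simp only [hQ] at hx
      split at hx
      next hsub =>
        refine mem_iUnion.2 ⟨m, ?_⟩
        rw [heq m]
        exact ⟨hsub hx.1, hx.2⟩
      next => exact absurd hx (notMem_empty x)
    · intro x hx
      rw [hAeq] at hx
      obtain ⟨m, hm⟩ := mem_iUnion.1 hx
      rw [heq m] at hm
      obtain ⟨a, b, hab1, hab2⟩ := cover_lemma (hU m) hm.1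
      refine mem_iUnion.2 ⟨(m, a, b), ?_⟩
      simp only [hQ, if_pos hab2]
      exact ⟨hab1, hm.2⟩
  obtain ⟨P', hP'good, hP'union⟩ := good_reindex Q hQgood
  obtain ⟨B, hB1, hB2, hB3⟩ := main_disjointify P' hP'good
  exact ⟨B, hB1, hB2, by rw [← hQunion, ← hP'union, hB3]⟩
end

section
/- The complement in ℝⁿ of a simple analytic set is a finite union of pairwise disjoint simple analytic sets. -/
open Set

/-- A simple analytic set in ℝⁿ: a set of the form
`{x ∈ B | ∀ i < I, gᵢ⁺(x) > 0 ∧ ∀ j < J, gⱼ⁻(x) ≤ 0}` where `B` is an open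
ball (possibly all of ℝⁿ) and the `gᵢ⁺, gⱼ⁻` are real-analytic on ℝⁿ. -/
def IsSimpleAnalyticSet {n : ℕ} (A : Set (Fin n → ℝ)) : Prop :=
  ∃ (B : Set (Fin n → ℝ)) (I J : ℕ)
    (gp gm : ℕ → (Fin n → ℝ) → ℝ),
    ((∃ (x₀ : Fin n → ℝ) (ε : ℝ), 0 < ε ∧ B = Metric.ball x₀ ε) ∨ B = Set.univ) ∧
    (∀ i, AnalyticOnNhd ℝ (gp i) Set.univ) ∧
    (∀ j, AnalyticOnNhd ℝ (gm j) Set.univ) ∧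
    A = {x | x ∈ B ∧ (∀ i < I, 0 < gp i x) ∧ ∀ j < J, gm j x ≤ 0}

/-- Logical decomposition of the complement of a finite intersection of
conditions, using the least failing condition. -/
private lemma compl_decomp {α : Type*} (cond : ℕ → α → Prop) (N : ℕ) :
    {x | ∀ k < N, cond k x}ᶜ
      = ⋃ k < N, {x | (∀ m < k, cond m x) ∧ ¬ cond k x} := by
  ext x
  simp only [mem_compl_iff, mem_setOf_eq, mem_iUnion, exists_prop]
  constructor
  · intro h
    push_neg at h
    obtain ⟨k, hkN, hk⟩ := h
    classical
    have hex : ∃ k, k < N ∧ ¬ cond k x := ⟨k, hkN, hk⟩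
    refine ⟨Nat.find hex, (Nat.find_spec hex).1, ?_, (Nat.find_spec hex).2⟩
    intro m hm
    by_contra hmc
    exact Nat.find_min hex hm ⟨hm.trans (Nat.find_spec hex).1, hmc⟩
  · rintro ⟨k, hkN, _, hk⟩ h
    exact hk (h k hkN)

private lemma ball_eq_pos_set {n : ℕ} (x₀ : Fin n → ℝ) (ε : ℝ) (hε : 0 < ε) :
    Metric.ball x₀ ε = {x : Fin n → ℝ | ∀ m < n,
      0 < (fun x : Fin n → ℝ =>
        if h : m < n then ε ^ 2 - (x ⟨m, h⟩ - x₀ ⟨m, h⟩) ^ 2 else 1) x} := by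
  ext x
  simp only [Metric.mem_ball, mem_setOf_eq]
  rw [dist_pi_lt_iff hε]
  constructor
  · intro h m hm
    rw [dif_pos hm, sub_pos, sq_lt_sq, abs_of_pos hε, ← Real.dist_eq]
    exact h ⟨m, hm⟩
  · intro h i
    have := h i i.2
    rw [dif_pos i.2, sub_pos, sq_lt_sq, abs_of_pos hε, ← Real.dist_eq] at this
    exact this

/-- The complement of a simple analytic set is a finite union of pairwise
disjoint simple analytic sets. -/
theorem compl_simpleAnalytic_eq_finite_disjoint_union {n : ℕ}
    {A : Set (Fin n → ℝ)} (hA : IsSimpleAnalyticSet A) :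
    ∃ (N : ℕ) (C : ℕ → Set (Fin n → ℝ)),
      (∀ k < N, IsSimpleAnalyticSet (C k)) ∧
      (∀ k < N, ∀ l < N, k ≠ l → Disjoint (C k) (C l)) ∧
      Aᶜ = ⋃ k < N, C k := by
  obtain ⟨B, I, J, gp, gm, hB, hgp, hgm, hAeq⟩ := hA
  -- Step 1: express B as a finite intersection of strict positivity conditions
  obtain ⟨M, bp, hbp, hBeq⟩ : ∃ (M : ℕ) (bp : ℕ → (Fin n → ℝ) → ℝ),
      (∀ m, AnalyticOnNhd ℝ (bp m) univ) ∧ B = {x | ∀ m < M, 0 < bp m x} := by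
    rcases hB with ⟨x₀, ε, hε, rfl⟩ | rfl
    · refine ⟨n, fun m x => if h : m < n then ε ^ 2 - (x ⟨m, h⟩ - x₀ ⟨m, h⟩) ^ 2 else 1,
        ?_, ?_⟩
      · intro m
        by_cases h : m < n
        · simp only [dif_pos h]
          intro x _
          have h1 : AnalyticAt ℝ (fun x : Fin n → ℝ => x ⟨m, h⟩ - x₀ ⟨m, h⟩) x :=
            ((ContinuousLinearMap.proj (⟨m, h⟩ : Fin n) :
              (Fin n → ℝ) →L[ℝ] ℝ).analyticAt x).sub analyticAt_const
          exact analyticAt_const.sub (h1.pow 2)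
        · simp only [dif_neg h]
          exact analyticOnNhd_const
      · exact ball_eq_pos_set x₀ ε hε
    · exact ⟨0, fun _ _ => 1, fun _ => analyticOnNhd_const, by simp⟩
  -- Step 2: merge positivity conditions into one list
  set fp : ℕ → (Fin n → ℝ) → ℝ := fun i => if i < M then bp i else gp (i - M) with hfp
  have hfpa : ∀ i, AnalyticOnNhd ℝ (fp i) univ := by
    intro i
    rw [hfp]
    by_cases h : i < M
    · simpa [h] using hbp i
    · simpa [h] using hgp (i - M)
  have hAeq2 : A = {x | (∀ i < M + I, 0 < fp i x) ∧ ∀ j < J, gm j x ≤ 0} := by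
    rw [hAeq, hBeq]
    ext x
    simp only [mem_setOf_eq, hfp]
    constructor
    · rintro ⟨h1, h2, h3⟩
      refine ⟨fun i hi => ?_, h3⟩
      by_cases h : i < M
      · simpa [h] using h1 i h
      · simpa [h] using h2 (i - M) (by omega)
    · rintro ⟨h1, h3⟩
      refine ⟨fun m hm => ?_, fun i hi => ?_, h3⟩
      · simpa [hm] using h1 m (by omega)
      · have := h1 (M + i) (by omega)
        simpa using this
  set I' := M + I with hI'
  -- Step 3: conditions
  set cond : ℕ → (Fin n → ℝ) → Prop :=
    fun k x => if k < I' then 0 < fp k x else gm (k - I') x ≤ 0 with hcond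
  have hAeq3 : A = {x | ∀ k < I' + J, cond k x} := by
    rw [hAeq2]
    ext x
    simp only [mem_setOf_eq, hcond]
    constructor
    · rintro ⟨h1, h2⟩ k hk
      by_cases h : k < I'
      · simpa [h] using h1 k h
      · simpa [h] using h2 (k - I') (by omega)
    · intro h
      constructor
      · intro i hi; simpa [hi] using h i (by omega)
      · intro j hj
        have := h (I' + j) (by omega)
        simpa [show ¬ (I' + j < I') by omega] using this
  refine ⟨I' + J, fun k => {x | (∀ m < k, cond m x) ∧ ¬ cond k x}, ?_, ?_, ?_⟩
  · -- each piece is simple analytic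
    intro k hk
    by_cases hkI : k < I'
    · refine ⟨univ, k, 1, fp, fun _ => fp k, Or.inr rfl, hfpa, fun _ => hfpa k, ?_⟩
      ext x
      simp only [mem_setOf_eq, mem_univ, true_and, hcond]
      constructor
      · rintro ⟨h1, h2⟩
        rw [if_pos hkI] at h2
        exact ⟨fun i hi => by simpa [show i < I' by omega] using h1 i hi,
          fun j _ => not_lt.mp h2⟩
      · rintro ⟨h1, h2⟩
        refine ⟨fun m hm => by simpa [show m < I' by omega] using h1 m hm, ?_⟩
        rw [if_pos hkI]
        exact not_lt.mpr (h2 0 Nat.one_pos)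
    · -- k = I' + j case
      refine ⟨univ, I' + 1, k - I', fun i => if i < I' then fp i else gm (k - I'), gm,
        Or.inr rfl, ?_, hgm, ?_⟩
      · intro i
        by_cases h : i < I'
        · simpa [h] using hfpa i
        · simpa [h] using hgm (k - I')
      ext x
      simp only [mem_setOf_eq, mem_univ, true_and, hcond]
      constructor
      · rintro ⟨h1, h2⟩
        rw [if_neg hkI, not_le] at h2
        refine ⟨fun i hi => ?_, fun j hj => ?_⟩
        · by_cases h : i < I'
          · have := h1 i (by omega)
            simpa [h] using this
          · have : i = I' := by omega
            simpa [this] using h2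
        · have := h1 (I' + j) (by omega)
          simpa [show ¬ (I' + j < I') by omega] using this
      · rintro ⟨h1, h2⟩
        refine ⟨fun m hm => ?_, ?_⟩
        · by_cases h : m < I'
          · have := h1 m (by omega)
            simpa [h] using this
          · have := h2 (m - I') (by omega)
            simpa [show ¬ (m < I') by omega] using this
        · rw [if_neg hkI, not_le]
          have := h1 I' (by omega)
          simpa using this
  · -- pairwise disjoint
    intro k _ l _ hkl
    rcases Nat.lt_or_ge k l with h | h
    · refine Set.disjoint_left.mpr ?_
      rintro x ⟨_, hx2⟩ ⟨hy1, _⟩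
      exact hx2 (hy1 k h)
    · have h' : l < k := by omega
      refine Set.disjoint_left.mpr ?_
      rintro x ⟨hx1, _⟩ ⟨_, hy2⟩
      exact hy2 (hx1 l h')
  · rw [hAeq3]
    exact compl_decomp cond (I' + J)
end

section
/- Let f : U → ℝᵐ be real-analytic on a connected open set U ⊆ ℝⁿ, and let k be the maximal rank of its derivative on U. Then the set V = {x ∈ U | rank(Df(x)) = k} is open, dense in U, and U \ V has Lebesgue measure zero. -/
open Set MeasureTheory

/-- The rank of the Jacobian (total derivative) of `f` at `x`. -/
noncomputable def jacRank {n m : ℕ} (f : (Fin n → ℝ) → (Fin m → ℝ))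
    (x : Fin n → ℝ) : ℕ :=
  Module.finrank ℝ (LinearMap.range (fderiv ℝ f x).toLinearMap)

/-!
The `k × k` minors of the Jacobian matrix are analytic on `U`, and `rank Df(x) ≥ k` exactly when
one of them is nonzero at `x`. As `k` is the maximal rank, `V` is the union of the open sets where
some minor does not vanish. A minor that is nonzero at one point of the connected set `U` is not
identically zero there, so its zero set, which contains `U \ V`, is Lebesgue-null; a null set has
empty interior, whence density.

The zero set of an analytic `g ≢ 0` is null because near each point some directional derivative
`D_v^j g` is nonzero, so that `g` has only isolated zeros on every line in direction `v` there;
Fubini along these lines concludes.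
-/

open Filter Topology Module Submodule

theorem exists_linearIndependent_comp_of_le_finrank_span {K V ι : Type*} [DivisionRing K]
    [AddCommGroup V] [Module K V] [Finite ι] (v : ι → V) {k : ℕ}
    (hk : k ≤ finrank K (span K (range v))) : ∃ c : Fin k → ι, LinearIndependent K (v ∘ c) := by
  obtain ⟨κ, a, ha, hspan, hli⟩ := exists_linearIndependent' K v
  have : Fintype κ := @Fintype.ofFinite κ (Finite.of_injective a ha)
  rw [← hspan, finrank_span_eq_card hli] at hk
  obtain ⟨e⟩ : Nonempty (Fin k ↪ κ) := Function.Embedding.nonempty_of_card_le (by simpa using hk)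
  exact ⟨a ∘ e, hli.comp e e.injective⟩

namespace Matrix

variable {m n K : Type*} [Fintype n] [Field K]

theorem exists_submatrix_det_ne_zero_of_le_rank [Fintype m] (A : Matrix m n K) {k : ℕ}
    (hk : k ≤ A.rank) : ∃ (r : Fin k → m) (c : Fin k → n), (A.submatrix r c).det ≠ 0 := by
  rw [rank_eq_finrank_span_cols] at hk
  obtain ⟨c, hc⟩ := exists_linearIndependent_comp_of_le_finrank_span A.col hk
  have hcols : k ≤ (A.submatrix id c).rank := by
    rw [← rank_transpose, LinearIndependent.rank_matrix (by exact hc), Fintype.card_fin]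
  rw [rank_eq_finrank_span_row] at hcols
  obtain ⟨r, hr⟩ := exists_linearIndependent_comp_of_le_finrank_span _ hcols
  exact ⟨r, c, ((isUnit_iff_isUnit_det _).1 (linearIndependent_rows_iff_isUnit.1 hr)).ne_zero⟩

theorem le_rank_of_submatrix_det_ne_zero (A : Matrix m n K) {k : ℕ} {r : Fin k → m}
    {c : Fin k → n} (h : (A.submatrix r c).det ≠ 0) : k ≤ A.rank :=
  calc k = (A.submatrix r c).rank := by
        rw [rank_of_isUnit _ ((isUnit_iff_isUnit_det _).2 h.isUnit), Fintype.card_fin]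
    _ ≤ A.rank := rank_submatrix_le A r c

theorem le_rank_iff_exists_submatrix_det_ne_zero [Fintype m] (A : Matrix m n K) {k : ℕ} :
    k ≤ A.rank ↔ ∃ (r : Fin k → m) (c : Fin k → n), (A.submatrix r c).det ≠ 0 :=
  ⟨A.exists_submatrix_det_ne_zero_of_le_rank, fun ⟨_, _, h⟩ => A.le_rank_of_submatrix_det_ne_zero h⟩

end Matrix

theorem AnalyticOnNhd.matrix_det {𝕜 E ι : Type*} [NontriviallyNormedField 𝕜]
    [NormedAddCommGroup E] [NormedSpace 𝕜 E] [Fintype ι] [DecidableEq ι]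
    {M : E → Matrix ι ι 𝕜} {s : Set E} (hM : ∀ i j, AnalyticOnNhd 𝕜 (fun x => M x i j) s) :
    AnalyticOnNhd 𝕜 (fun x => (M x).det) s := by
  simp only [Matrix.det_apply]
  refine Finset.analyticOnNhd_fun_sum _ fun σ _ x hx => ?_
  simp only [Units.smul_def, zsmul_eq_mul]
  exact analyticAt_const.mul (Finset.analyticOnNhd_fun_prod _ (fun i _ => hM (σ i) i) x hx)

theorem measure_zeros_eq_zero_of_forall_not_eventuallyEq_zero {𝕜 F : Type*}
    [NontriviallyNormedField 𝕜] [MeasurableSpace 𝕜] [SecondCountableTopology 𝕜]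
    [NormedAddCommGroup F] [NormedSpace 𝕜 F] (μ : Measure 𝕜) [NullSingletonClass μ]
    {φ : 𝕜 → F} {I : Set 𝕜} (hI : MeasurableSet I)
    (hφ : ∀ t ∈ I, AnalyticAt 𝕜 φ t ∧ ¬ φ =ᶠ[𝓝 t] 0) :
    μ {t ∈ I | φ t = 0} = 0 := by
  have hcod : {t | φ t ≠ 0} ∈ codiscreteWithin I := by
    rw [mem_codiscreteWithin]
    intro t ht
    rw [disjoint_principal_right]
    filter_upwards [((hφ t ht).1.eventually_eq_zero_or_eventually_ne_zero).resolve_left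
      (hφ t ht).2] with u hu
    simp [hu]
  have := ae_restrict_le_codiscreteWithin (μ := μ) hI hcod
  rw [mem_ae_iff, Measure.restrict_apply' hI] at this
  simp only [compl_ofPred, not_not] at this
  rwa [inter_comm] at this

section LineSlices

variable {E : Type*} [NormedAddCommGroup E] [NormedSpace ℝ E] [FiniteDimensional ℝ E]
  [MeasurableSpace E] [BorelSpace E]

theorem Measure.addHaar_eq_zero_of_forall_line_null (μ : Measure E) [μ.IsAddHaarMeasure]
    (v : E) {s : Set E} (hs : MeasurableSet s)
    (h : ∀ x, volume ((fun t : ℝ => x + t • v) ⁻¹' s) = 0) : μ s = 0 := by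
  rcases eq_or_ne v 0 with rfl | hv
  · have : s = ∅ := eq_empty_of_forall_notMem fun x hx => by simpa [hx] using h x
    rw [this, measure_empty]
  obtain ⟨F, hF⟩ := (ℝ ∙ v).exists_isCompl
  let Φ : (ℝ × F) ≃L[ℝ] E :=
    ((LinearEquiv.toSpanNonzeroSingleton ℝ E v hv).prodCongr (LinearEquiv.refl ℝ F) ≪≫ₗ
      Submodule.prodEquivOfIsCompl _ _ hF).toContinuousLinearEquiv
  have hΦ : ∀ t y, Φ (t, y) = y + t • v := fun t y => by simp [Φ, add_comm]
  refine Measure.absolutelyContinuous_isAddHaarMeasure μ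
    (((volume : Measure ℝ).prod (Measure.addHaar : Measure F)).map Φ) ?_
  rw [Measure.map_apply Φ.continuous.measurable hs,
    Measure.prod_apply_symm (hs.preimage Φ.continuous.measurable)]
  simp only [preimage_preimage, hΦ, h, lintegral_zero]

end LineSlices

section Analytic

variable {E F : Type*} [NormedAddCommGroup E] [NormedSpace ℝ E]
  [NormedAddCommGroup F] [NormedSpace ℝ F]

theorem iteratedDeriv_comp_add_smul {n : WithTop ℕ∞} {g : E → F} {U : Set E} (hU : IsOpen U)
    (hg : ContDiffOn ℝ n g U) {j : ℕ} (hj : j ≤ n) (x v : E) {t : ℝ} (ht : x + t • v ∈ U) :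
    iteratedDeriv j (fun s : ℝ => g (x + s • v)) t
      = iteratedFDeriv ℝ j g (x + t • v) (fun _ => v) := by
  set L : ℝ →L[ℝ] E := (ContinuousLinearMap.id ℝ ℝ).smulRight v
  set U' : Set E := (x + ·) ⁻¹' U
  have hU' : IsOpen U' := hU.preimage (continuous_const.add continuous_id)
  have hL : IsOpen (L ⁻¹' U') := hU'.preimage L.continuous
  have hLt : L t ∈ U' := by simpa [L, U'] using ht
  have hg' : ContDiffOn ℝ n (fun z => g (x + z)) U' :=
    hg.comp (contDiff_const.add contDiff_id).contDiffOn fun _ hz => hz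
  have key := L.iteratedFDerivWithin_comp_right hg' hU'.uniqueDiffOn hL.uniqueDiffOn hLt hj
  rw [iteratedFDerivWithin_of_isOpen j hL hLt, iteratedFDerivWithin_of_isOpen j hU' hLt,
    iteratedFDeriv_comp_add_left] at key
  rw [iteratedDeriv_eq_iteratedFDeriv]
  simpa [L, Function.comp_def] using congrArg (· fun _ => 1) key

theorem AnalyticAt.exists_iteratedFDeriv_ne_zero [CompleteSpace F] {g : E → F} {y : E}
    (hg : AnalyticAt ℝ g y) (hne : ¬ g =ᶠ[𝓝 y] 0) :
    ∃ j v, iteratedFDeriv ℝ j g y (fun _ => v) ≠ 0 := by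
  by_contra! h
  obtain ⟨p, r, hp⟩ := hg
  refine hne ?_
  filter_upwards [Metric.eball_mem_nhds y hp.r_pos] with z hz
  have hz' : z - y ∈ Metric.eball 0 r := by
    rwa [Metric.mem_eball, edist_zero_right, ← edist_eq_enorm_sub]
  have := hp.hasSum_iteratedFDeriv hz'
  simp only [h, smul_zero, add_sub_cancel] at this
  exact this.unique hasSum_zero

theorem AnalyticOnNhd.addHaar_zeros_eq_zero [CompleteSpace F] [FiniteDimensional ℝ E]
    [MeasurableSpace E] [BorelSpace E] (μ : Measure E) [μ.IsAddHaarMeasure]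
    {U : Set E} (hU : IsOpen U) (hUc : IsPreconnected U) {g : E → F}
    (hg : AnalyticOnNhd ℝ g U) (hne : ∃ x ∈ U, g x ≠ 0) :
    μ {x ∈ U | g x = 0} = 0 := by
  obtain ⟨x₀, hx₀U, hx₀⟩ := hne
  refine measure_null_of_locally_null _ fun y hy => ?_
  have hgerm : ¬ g =ᶠ[𝓝 y] 0 := fun h =>
    hx₀ (hg.eqOn_zero_of_preconnected_of_eventuallyEq_zero hUc hy.1 h hx₀U)
  obtain ⟨j, v, hjv⟩ := (hg y hy.1).exists_iteratedFDeriv_ne_zero hgerm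
  set W := U ∩ (fun x => iteratedFDeriv ℝ j g x (fun _ => v)) ⁻¹' {0}ᶜ
  have hW : IsOpen W :=
    ((ContinuousMultilinearMap.apply ℝ _ F fun _ => v).continuous.comp_continuousOn
      (hg.iteratedFDeriv j).continuousOn).isOpen_inter_preimage hU isOpen_compl_singleton
  refine ⟨{x ∈ W | g x = 0}, mem_nhdsWithin.2 ⟨W, hW, ⟨hy.1, hjv⟩, fun x hx => ⟨hx.1, hx.2.2⟩⟩, ?_⟩
  have hmeas : MeasurableSet {x ∈ W | g x = 0} := by
    have := (hg.continuousOn.mono inter_subset_left).isOpen_inter_preimage hW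
      (isOpen_compl_singleton (x := (0 : F)))
    convert hW.measurableSet.diff this.measurableSet using 1
    ext x; by_cases hx : g x = 0 <;> simp [hx, W]
  refine Measure.addHaar_eq_zero_of_forall_line_null μ v hmeas fun x => ?_
  refine measure_zeros_eq_zero_of_forall_not_eventuallyEq_zero volume
    (hW.preimage (continuous_const.add (continuous_id.smul continuous_const))).measurableSet
    fun t ht => ⟨(hg _ ht.1).comp_of_eq (by fun_prop) rfl, fun h => ht.2 ?_⟩
  show iteratedFDeriv ℝ j g (x + t • v) (fun _ => v) = 0
  rw [← iteratedDeriv_comp_add_smul hU (hg.contDiffOn hU.uniqueDiffOn) le_top x v ht.1,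
    h.iteratedDeriv_eq]
  simp

end Analytic

theorem subset_closure_of_measure_diff_eq_zero {X : Type*} [TopologicalSpace X]
    [MeasurableSpace X] (μ : Measure X) [μ.IsOpenPosMeasure] {U V : Set X} (hU : IsOpen U)
    (h : μ (U \ V) = 0) : U ⊆ closure V := by
  intro x hx
  rw [mem_closure_iff_nhds]
  intro t ht
  by_contra hempty
  have hsub : t ∩ U ⊆ U \ V := fun y hy => ⟨hy.2, fun hyV => hempty ⟨y, hy.1, hyV⟩⟩
  exact (Measure.measure_pos_of_mem_nhds μ (inter_mem ht (hU.mem_nhds hx))).ne'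
    (measure_mono_null hsub h)

noncomputable def jacobianMatrix {n m : ℕ} (f : (Fin n → ℝ) → (Fin m → ℝ)) (x : Fin n → ℝ) :
    Matrix (Fin m) (Fin n) ℝ :=
  LinearMap.toMatrix' (fderiv ℝ f x).toLinearMap

section Jacobian

variable {n m : ℕ} {f : (Fin n → ℝ) → (Fin m → ℝ)}

theorem jacRank_eq_rank_jacobianMatrix (x : Fin n → ℝ) :
    jacRank f x = (jacobianMatrix f x).rank := by
  rw [jacRank, jacobianMatrix, Matrix.rank, ← Matrix.toLin'_apply', Matrix.toLin'_toMatrix']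

theorem AnalyticOnNhd.jacobianMatrix_submatrix_det {U : Set (Fin n → ℝ)}
    (hf : AnalyticOnNhd ℝ f U) {k : ℕ} (r : Fin k → Fin m) (c : Fin k → Fin n) :
    AnalyticOnNhd ℝ (fun x => ((jacobianMatrix f x).submatrix r c).det) U := by
  refine AnalyticOnNhd.matrix_det fun i j => ?_
  simp only [Matrix.submatrix_apply, jacobianMatrix, LinearMap.toMatrix'_apply,
    ContinuousLinearMap.coe_coe]
  let L := (ContinuousLinearMap.proj (r i) : (Fin m → ℝ) →L[ℝ] ℝ).comp
    (ContinuousLinearMap.apply ℝ (Fin m → ℝ) (Pi.single (c j) 1 : Fin n → ℝ))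
  exact fun x hx => (L.analyticAt _).comp (hf.fderiv x hx)

theorem AnalyticOnNhd.isOpen_setOf_le_jacRank {U : Set (Fin n → ℝ)} (hU : IsOpen U)
    (hf : AnalyticOnNhd ℝ f U) (k : ℕ) : IsOpen {x | x ∈ U ∧ k ≤ jacRank f x} := by
  have : {x | x ∈ U ∧ k ≤ jacRank f x} = ⋃ (r : Fin k → Fin m) (c : Fin k → Fin n),
      U ∩ (fun x => ((jacobianMatrix f x).submatrix r c).det) ⁻¹' {0}ᶜ := by
    ext x
    simp [jacRank_eq_rank_jacobianMatrix, Matrix.le_rank_iff_exists_submatrix_det_ne_zero]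
  rw [this]
  exact isOpen_iUnion fun r => isOpen_iUnion fun c =>
    (hf.jacobianMatrix_submatrix_det r c).continuousOn.isOpen_inter_preimage hU
      isOpen_compl_singleton

end Jacobian

/-- For `f` real-analytic on a connected open set `U`, the set `V` of points
where the Jacobian attains its maximal rank `k` is open, dense in `U`, and of
full Lebesgue measure in `U`. -/
theorem maxRank_set_open_dense_conull {n m k : ℕ} {U : Set (Fin n → ℝ)}
    (hU : IsOpen U) (hUc : IsConnected U)
    {f : (Fin n → ℝ) → (Fin m → ℝ)} (hf : AnalyticOnNhd ℝ f U)
    (hle : ∀ x ∈ U, jacRank f x ≤ k) (hmax : ∃ x ∈ U, jacRank f x = k) :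
    IsOpen {x | x ∈ U ∧ jacRank f x = k} ∧
    U ⊆ closure {x | x ∈ U ∧ jacRank f x = k} ∧
    volume (U \ {x | x ∈ U ∧ jacRank f x = k}) = 0 := by
  have hV : {x | x ∈ U ∧ jacRank f x = k} = {x | x ∈ U ∧ k ≤ jacRank f x} := by
    ext x
    exact and_congr_right fun hx => ⟨fun h => h.ge, fun h => le_antisymm (hle x hx) h⟩
  obtain ⟨x₀, hx₀U, hx₀⟩ := hmax
  obtain ⟨r, c, hrc⟩ := (jacobianMatrix f x₀).exists_submatrix_det_ne_zero_of_le_rank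
    (jacRank_eq_rank_jacobianMatrix (f := f) x₀ ▸ hx₀.ge)
  have hnull : volume (U \ {x | x ∈ U ∧ jacRank f x = k}) = 0 := by
    refine measure_mono_null ?_ ((hf.jacobianMatrix_submatrix_det r c).addHaar_zeros_eq_zero
      volume hU hUc.isPreconnected ⟨x₀, hx₀U, hrc⟩)
    rintro x ⟨hxU, hxV⟩
    refine ⟨hxU, not_not.1 fun h => hxV ?_⟩
    rw [hV]
    exact ⟨hxU, jacRank_eq_rank_jacobianMatrix (f := f) x ▸
      (jacobianMatrix f x).le_rank_of_submatrix_det_ne_zero h⟩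
  exact ⟨hV ▸ hf.isOpen_setOf_le_jacRank hU k,
    subset_closure_of_measure_diff_eq_zero volume hU hnull, hnull⟩
end
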